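/- Let Σ_i = (A_i,B_i,C_i,D_i), i ∈ {1,2}, be linear control systems with the same internal input dimension p and the same output dimension q, and suppose matrices P ∈ ℝ^{n₂×n₁} and K₁, K₂, K₃ satisfy A₂ + B₂K₁ Hurwitz, A₂P = PA₁ + B₂K₂, D₂ = PD₁ + B₂K₃, C₁ = C₂P. Let M ∈ ℝ^{n₂×n₂} be symmetric positive definite with C₂ᵀC₂ ⪯ M and (A₂+B₂K₁)ᵀM + M(A₂+B₂K₁) ⪯ −2λM for some λ > 0, and let K₄ be any matrix of appropriate dimension. Define V(x₁,x₂) = ((x₂−Px₁)ᵀ M (x₂−Px₁))^{1/2}. Then: (i) |C₁x₁ − C₂x₂| ≤ V(x₁,x₂) for all x₁, x₂; and (ii) for all x₁, x₂, u₁, w₁, w₂, with u₂ = K₁(x₂−Px₁) − K₂x₁ − K₃w₁ + K₄u₁ and V(x₁,x₂) > 0, the derivative of V along the dynamics satisfies (x₂−Px₁)ᵀ M ((A₂x₂+B₂u₂+D₂w₂) − P(A₁x₁+B₁u₁+D₁w₁)) / V(x₁,x₂) ≤ −λ·V(x₁,x₂) + |√M (PB₁ − B₂K₄)|·|u₁|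 + Σ_{i=1}^{p} |√M d_i|·|w₁,ᵢ − w₂,ᵢ|, where d_i denotes the i-th column of D₂, |·| denotes the Euclidean/spectral norm, and √M is the positive definite square root of M. Consequently V is a simulation function from Σ₁ to Σ₂ with α = id, λ(r) = λr, ρ(r) = |√M(PB₁−B₂K₄)|·r and μ(s₁,…,s_p) = Σ_i |√M d_i|·s_i, with the interface u₂ as above. -/

import Mathlib

open Matrix

noncomputable section

abbrev Euc (k : ℕ) := EuclideanSpace ℝ (Fin k)

/-- Matrix–vector product as a map of Euclidean spaces. -/
def mulE {a b : ℕ} (A : Matrix (Fin a) (Fin b) ℝ) (x : Euc b) : Euc a :=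
  Matrix.toEuclideanLin A x

/-- Upper-right Dini derivative of `V` at `x` in direction `v`. -/
def diniDeriv {E : Type*} [AddCommGroup E] [Module ℝ E] (V : E → ℝ) (x v : E) : ℝ :=
  Filter.limsup (fun t : ℝ => (V (x + t • v) - V x) / t) (nhdsWithin (0 : ℝ) (Set.Ioi 0))

/-- Spectral norm (Euclidean operator norm) of a matrix. -/
def specNorm {a b : ℕ} (A : Matrix (Fin a) (Fin b) ℝ) : ℝ :=
  ‖LinearMap.toContinuousLinearMap (Matrix.toEuclideanLin A)‖

/-- The square root `Matrix.PosSemidef.sqrt` of a positive semidefinite matrix, as defined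
in the older Mathlib (removed since). -/
def posSemidefSqrt {n : ℕ} {A : Matrix (Fin n) (Fin n) ℝ} (hA : A.PosSemidef) :
    Matrix (Fin n) (Fin n) ℝ :=
  (hA.1.eigenvectorUnitary : Matrix (Fin n) (Fin n) ℝ) *
    diagonal (((↑) : ℝ → ℝ) ∘ (√·) ∘ hA.1.eigenvalues) *
    (star hA.1.eigenvectorUnitary : Matrix (Fin n) (Fin n) ℝ)

/-- The square-root-of-quadratic candidate simulation function
`V(x₁,x₂) = ((x₂ − Px₁)ᵀ M (x₂ − Px₁))^{1/2}`. -/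
def Vquad {n₁ n₂ : ℕ} (P : Matrix (Fin n₂) (Fin n₁) ℝ) (M : Matrix (Fin n₂) (Fin n₂) ℝ)
    (z : Euc n₁ × Euc n₂) : ℝ :=
  Real.sqrt (((z.2 - mulE P z.1 : Euc n₂) : Fin n₂ → ℝ) ⬝ᵥ
    M.mulVec ((z.2 - mulE P z.1 : Euc n₂) : Fin n₂ → ℝ))

/-! ### Auxiliary lemmas -/

lemma posSemidefSqrt_herm {n : ℕ} {A : Matrix (Fin n) (Fin n) ℝ} (hA : A.PosSemidef) :
    (posSemidefSqrt hA)ᴴ = posSemidefSqrt hA := by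
  simp [posSemidefSqrt, conjTranspose_mul, Matrix.mul_assoc, diagonal_conjTranspose,
    star_eq_conjTranspose, conjTranspose_eq_transpose_of_trivial]

lemma posSemidefSqrt_transpose {n : ℕ} {A : Matrix (Fin n) (Fin n) ℝ} (hA : A.PosSemidef) :
    (posSemidefSqrt hA)ᵀ = posSemidefSqrt hA := by
  have := posSemidefSqrt_herm hA
  rwa [conjTranspose_eq_transpose_of_trivial] at this

lemma posSemidefSqrt_mul_self {n : ℕ} {A : Matrix (Fin n) (Fin n) ℝ} (hA : A.PosSemidef) :
    posSemidefSqrt hA * posSemidefSqrt hA = A := by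
  set U : Matrix (Fin n) (Fin n) ℝ := (hA.1.eigenvectorUnitary : Matrix (Fin n) (Fin n) ℝ)
  have hU : (star hA.1.eigenvectorUnitary : Matrix (Fin n) (Fin n) ℝ) * U = 1 :=
    Unitary.coe_star_mul_self _
  calc posSemidefSqrt hA * posSemidefSqrt hA
      = U * (diagonal (((↑) : ℝ → ℝ) ∘ (√·) ∘ hA.1.eigenvalues) *
          ((star hA.1.eigenvectorUnitary : Matrix (Fin n) (Fin n) ℝ) * U) *
          diagonal (((↑) : ℝ → ℝ) ∘ (√·) ∘ hA.1.eigenvalues)) *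
          (star hA.1.eigenvectorUnitary : Matrix (Fin n) (Fin n) ℝ) := by
        simp only [posSemidefSqrt, U, Matrix.mul_assoc]
    _ = U * diagonal hA.1.eigenvalues *
          (star hA.1.eigenvectorUnitary : Matrix (Fin n) (Fin n) ℝ) := by
        rw [hU, Matrix.mul_one, diagonal_mul_diagonal]
        congr 3
        funext i
        simp [Real.mul_self_sqrt (hA.eigenvalues_nonneg i)]
    _ = A := by
        conv_rhs => rw [hA.1.spectral_theorem]
        simp [U]
open Filter

def toE {k : ℕ} (x : Fin k → ℝ) : Euc k := (WithLp.equiv 2 _).symm x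

lemma mulE_def {a b : ℕ} (A : Matrix (Fin a) (Fin b) ℝ) (x : Euc b) :
    mulE A x = toE (A *ᵥ (x : Fin b → ℝ)) := rfl

lemma toE_coe {k : ℕ} (x : Fin k → ℝ) : ((toE x : Euc k) : Fin k → ℝ) = x := rfl

lemma toE_sub {k : ℕ} (x y : Fin k → ℝ) : toE (x - y) = toE x - toE y := rfl

lemma toE_sum {k : ℕ} {ι : Type*} (s : Finset ι) (f : ι → (Fin k → ℝ)) :
    toE (∑ i ∈ s, f i) = ∑ i ∈ s, toE (f i) := WithLp.toLp_sum (p := 2) (s := s) (f := f)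

lemma mulE_add {a b : ℕ} (A : Matrix (Fin a) (Fin b) ℝ) (x y : Euc b) :
    mulE A (x + y) = mulE A x + mulE A y := map_add (Matrix.toEuclideanLin A) x y

lemma mulE_sub {a b : ℕ} (A : Matrix (Fin a) (Fin b) ℝ) (x y : Euc b) :
    mulE A (x - y) = mulE A x - mulE A y := map_sub (Matrix.toEuclideanLin A) x y

lemma mulE_smul {a b : ℕ} (A : Matrix (Fin a) (Fin b) ℝ) (t : ℝ) (x : Euc b) :
    mulE A (t • x) = t • mulE A x := map_smul (Matrix.toEuclideanLin A) t x

lemma mulE_mulE {a b c : ℕ} (A : Matrix (Fin a) (Fin b) ℝ) (B : Matrix (Fin b) (Fin c) ℝ)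
    (x : Euc c) : mulE A (mulE B x) = mulE (A * B) x :=
  congrArg toE (mulVec_mulVec (x : Fin c → ℝ) A B)

lemma inner_eq_dot {k : ℕ} (x y : Euc k) :
    (inner ℝ x y) = (x : Fin k → ℝ) ⬝ᵥ (y : Fin k → ℝ) := by
  simp [PiLp.inner_apply, dotProduct, RCLike.inner_apply, mul_comm]

lemma norm_eq_sqrt_dot {k : ℕ} (x : Euc k) :
    ‖x‖ = Real.sqrt ((x : Fin k → ℝ) ⬝ᵥ (x : Fin k → ℝ)) := by
  rw [EuclideanSpace.norm_eq]
  simp [dotProduct, Real.norm_eq_abs, sq_abs, pow_two]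

lemma dot_le_norm {k : ℕ} (x y : Euc k) :
    |(x : Fin k → ℝ) ⬝ᵥ (y : Fin k → ℝ)| ≤ ‖x‖ * ‖y‖ := by
  rw [← inner_eq_dot]; exact abs_real_inner_le_norm x y

lemma mulE_le_spec {a b : ℕ} (A : Matrix (Fin a) (Fin b) ℝ) (x : Euc b) :
    ‖mulE A x‖ ≤ specNorm A * ‖x‖ :=
  (LinearMap.toContinuousLinearMap (Matrix.toEuclideanLin A)).le_opNorm x

lemma dot_mul {q n : ℕ} (C : Matrix (Fin q) (Fin n) ℝ) (e v : Fin n → ℝ) :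
    e ⬝ᵥ (Cᵀ * C) *ᵥ v = (C *ᵥ e) ⬝ᵥ (C *ᵥ v) := by
  rw [dotProduct_mulVec (C *ᵥ e) C v, vecMul_mulVec, ← dotProduct_mulVec]

lemma dot_sqrt {n : ℕ} (S M : Matrix (Fin n) (Fin n) ℝ) (hSsym : Sᵀ = S)
    (hSS : S * S = M) (e v : Fin n → ℝ) :
    e ⬝ᵥ M *ᵥ v = (S *ᵥ e) ⬝ᵥ (S *ᵥ v) := by
  rw [← dot_mul, hSsym, hSS]

lemma lyap_bound {n : ℕ} (M F : Matrix (Fin n) (Fin n) ℝ) (hMsym : Mᵀ = M) (lam : ℝ)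
    (hMLyap : ((-(2 * lam)) • M - (Fᵀ * M + M * F)).PosSemidef) (e : Fin n → ℝ) :
    e ⬝ᵥ M *ᵥ (F *ᵥ e) ≤ -lam * (e ⬝ᵥ M *ᵥ e) := by
  have hvm : e ᵥ* M = M *ᵥ e := by
    nth_rewrite 1 [← hMsym]; rw [vecMul_transpose]
  have h0 := hMLyap.dotProduct_mulVec_nonneg e
  simp only [star_trivial, sub_mulVec, add_mulVec, smul_mulVec, dotProduct_sub,
    dotProduct_add, dotProduct_smul, smul_eq_mul] at h0
  have hL : e ⬝ᵥ (Fᵀ * M) *ᵥ e = (F *ᵥ e) ⬝ᵥ (M *ᵥ e) := by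
    rw [← mulVec_mulVec, dotProduct_mulVec e Fᵀ, vecMul_transpose]
  have hR : e ⬝ᵥ (M * F) *ᵥ e = (M *ᵥ e) ⬝ᵥ (F *ᵥ e) := by
    rw [← mulVec_mulVec, dotProduct_mulVec e M, hvm]
  rw [hL, hR, dotProduct_comm (F *ᵥ e) (M *ᵥ e)] at h0
  have hgoal : e ⬝ᵥ M *ᵥ (F *ᵥ e) = (M *ᵥ e) ⬝ᵥ (F *ᵥ e) := by
    rw [dotProduct_mulVec e M, hvm]
  rw [hgoal]
  nlinarith [h0]

lemma dyn_eq {n₁ n₂ m₁ m₂ p : ℕ}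
    (A₁ : Matrix (Fin n₁) (Fin n₁) ℝ) (B₁ : Matrix (Fin n₁) (Fin m₁) ℝ)
    (D₁ : Matrix (Fin n₁) (Fin p) ℝ)
    (A₂ : Matrix (Fin n₂) (Fin n₂) ℝ) (B₂ : Matrix (Fin n₂) (Fin m₂) ℝ)
    (D₂ : Matrix (Fin n₂) (Fin p) ℝ)
    (P : Matrix (Fin n₂) (Fin n₁) ℝ)
    (K₁ : Matrix (Fin m₂) (Fin n₂) ℝ) (K₂ : Matrix (Fin m₂) (Fin n₁) ℝ)
    (K₃ : Matrix (Fin m₂) (Fin p) ℝ) (K₄ : Matrix (Fin m₂) (Fin m₁) ℝ)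
    (hK₂ : A₂ * P = P * A₁ + B₂ * K₂) (hK₃ : D₂ = P * D₁ + B₂ * K₃)
    (x₁ : Fin n₁ → ℝ) (x₂ : Fin n₂ → ℝ) (u₁ : Fin m₁ → ℝ) (w₁ w₂ : Fin p → ℝ) :
    (A₂ *ᵥ x₂ + B₂ *ᵥ (K₁ *ᵥ (x₂ - P *ᵥ x₁) - K₂ *ᵥ x₁ - K₃ *ᵥ w₁ + K₄ *ᵥ u₁) + D₂ *ᵥ w₂)
      - P *ᵥ (A₁ *ᵥ x₁ + B₁ *ᵥ u₁ + D₁ *ᵥ w₁)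
    = (A₂ + B₂ * K₁) *ᵥ (x₂ - P *ᵥ x₁) + D₂ *ᵥ (w₂ - w₁)
      - (P * B₁ - B₂ * K₄) *ᵥ u₁ := by
  have hPA : P * A₁ = A₂ * P - B₂ * K₂ := by rw [eq_sub_iff_add_eq]; exact hK₂.symm
  have hPD : P * D₁ = D₂ - B₂ * K₃ := by rw [eq_sub_iff_add_eq]; exact hK₃.symm
  simp only [mulVec_add, mulVec_sub, mulVec_mulVec, hPA, hPD, sub_mulVec, add_mulVec,
    Matrix.mul_assoc, Matrix.add_mul, Matrix.sub_mul]
  abel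

lemma col_sum {n m p : ℕ} (S : Matrix (Fin n) (Fin m) ℝ) (D : Matrix (Fin m) (Fin p) ℝ)
    (c : Fin p → ℝ) :
    (S * D) *ᵥ c = ∑ i : Fin p, c i • (S *ᵥ (fun j => D j i)) := by
  funext j
  simp [mulVec, dotProduct, Matrix.mul_apply, Finset.sum_apply, Finset.sum_mul,
    Finset.mul_sum, mul_comm, mul_left_comm]

lemma limsup_norm_dir_zero {E : Type*} [NormedAddCommGroup E] [InnerProductSpace ℝ E] (b : E) :
    Filter.limsup (fun t : ℝ => (‖(0:E) + t • b‖ - ‖(0:E)‖) / t) (nhdsWithin (0:ℝ) (Set.Ioi 0))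
      = ‖b‖ := by
  have : ∀ᶠ t : ℝ in nhdsWithin 0 (Set.Ioi 0),
      (‖(0:E) + t • b‖ - ‖(0:E)‖) / t = ‖b‖ := by
    filter_upwards [self_mem_nhdsWithin] with t ht
    rw [zero_add, norm_zero, sub_zero, norm_smul, Real.norm_eq_abs,
      abs_of_pos ht, mul_comm, mul_div_assoc, div_self (ne_of_gt ht), mul_one]
  rw [Filter.limsup_congr this, Filter.limsup_const]

lemma limsup_norm_dir {E : Type*} [NormedAddCommGroup E] [InnerProductSpace ℝ E] (a b : E)
    (h : a ≠ 0) :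
    Filter.limsup (fun t : ℝ => (‖a + t • b‖ - ‖a‖) / t) (nhdsWithin (0:ℝ) (Set.Ioi 0))
      = (inner ℝ a b) / ‖a‖ := by
  have hq : HasDerivAt (fun t : ℝ => ‖a‖^2 + 2*(inner ℝ a b)*t + ‖b‖^2*t^2)
      (2*(inner ℝ a b)) 0 := by
    have h1 : HasDerivAt (fun t : ℝ => ‖a‖^2 + 2*(inner ℝ a b)*t + ‖b‖^2*t^2)
        (0 + 2*(inner ℝ a b)*1 + ‖b‖^2*(↑2*0^(2-1)*1)) 0 :=
      (((hasDerivAt_const _ _).add ((hasDerivAt_id 0).const_mul _)).add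
        (((hasDerivAt_id (0:ℝ)).pow 2).const_mul _))
    simpa using h1
  have hq0 : (‖a‖^2 + 2*(inner ℝ a b)*0 + ‖b‖^2*0^2) ≠ 0 := by
    simpa using pow_ne_zero 2 (norm_ne_zero_iff.mpr h)
  have hs : HasDerivAt (fun t : ℝ => Real.sqrt (‖a‖^2 + 2*(inner ℝ a b)*t + ‖b‖^2*t^2))
      ((2*(inner ℝ a b)) / (2 * Real.sqrt (‖a‖^2 + 2*(inner ℝ a b)*0 + ‖b‖^2*0^2))) 0 := by
    have := (Real.hasDerivAt_sqrt hq0).comp 0 hq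
    exact this.congr_deriv (by ring)
  have heq : (fun t : ℝ => Real.sqrt (‖a‖^2 + 2*(inner ℝ a b)*t + ‖b‖^2*t^2))
      = fun t : ℝ => ‖a + t • b‖ := by
    funext t
    rw [← Real.sqrt_sq (norm_nonneg (a + t • b))]
    congr 1
    rw [norm_add_sq_real, real_inner_smul_right, norm_smul]
    simp only [Real.norm_eq_abs, mul_pow, sq_abs]
    ring
  rw [heq] at hs
  have hval : (2*(inner ℝ a b)) / (2 * Real.sqrt (‖a‖^2 + 2*(inner ℝ a b)*0 + ‖b‖^2*0^2))
      = (inner ℝ a b) / ‖a‖ := by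
    rw [show ‖a‖^2 + 2*(inner ℝ a b)*0 + ‖b‖^2*0^2 = ‖a‖^2 by ring,
      Real.sqrt_sq (norm_nonneg a)]
    rw [mul_div_mul_left _ _ (two_ne_zero)]
  rw [hval] at hs
  have hdw := hs.hasDerivWithinAt (s := Set.Ioi 0)
  have ht : Tendsto (fun t : ℝ => (‖a + t • b‖ - ‖a‖) / t) (nhdsWithin 0 (Set.Ioi 0))
      (nhds ((inner ℝ a b) / ‖a‖)) := by
    have hsl := hasDerivWithinAt_iff_tendsto_slope.mp hdw
    have h2 : Set.Ioi (0:ℝ) \ {0} = Set.Ioi 0 := by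
      ext t; simp (config := {contextual := true}) [ne_of_gt]
    rw [h2] at hsl
    refine hsl.congr (fun t => ?_)
    simp [slope_def_field, div_eq_inv_mul]
  exact ht.limsup_eq

lemma dot_sum {n : ℕ} {ι : Type*} (s : Finset ι) (x : Fin n → ℝ) (f : ι → Fin n → ℝ) :
    x ⬝ᵥ (∑ i ∈ s, f i) = ∑ i ∈ s, x ⬝ᵥ f i := by
  simp only [dotProduct, Finset.sum_apply, Finset.mul_sum]
  exact Finset.sum_comm

lemma key_bound {n₂ m₁ p : ℕ}
    (M S F : Matrix (Fin n₂) (Fin n₂) ℝ) (Q : Matrix (Fin n₂) (Fin m₁) ℝ)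
    (D₂ : Matrix (Fin n₂) (Fin p) ℝ) (lam : ℝ)
    (hMsym : Mᵀ = M) (hSsym : Sᵀ = S) (hSS : S * S = M)
    (hMLyap : ((-(2*lam)) • M - (Fᵀ*M + M*F)).PosSemidef)
    (hMps : M.PosSemidef)
    (e : Fin n₂ → ℝ) (u₁ : Euc m₁) (w₁ w₂ : Euc p) :
    e ⬝ᵥ M *ᵥ (F *ᵥ e + D₂ *ᵥ ((w₂ - w₁ : Euc p) : Fin p → ℝ) - Q *ᵥ (u₁ : Fin m₁ → ℝ))
      ≤ Real.sqrt (e ⬝ᵥ M *ᵥ e) * (-(lam * Real.sqrt (e ⬝ᵥ M *ᵥ e))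
          + specNorm (S * Q) * ‖u₁‖
          + ∑ i : Fin p, ‖mulE S (WithLp.toLp 2 (fun j => D₂ j i) : Euc n₂)‖ * |w₁ i - w₂ i|) := by
  have hq0 : 0 ≤ e ⬝ᵥ M *ᵥ e := by simpa using hMps.dotProduct_mulVec_nonneg e
  have hVsq : Real.sqrt (e ⬝ᵥ M *ᵥ e) ^ 2 = e ⬝ᵥ M *ᵥ e := Real.sq_sqrt hq0
  have hnorm : Real.sqrt (e ⬝ᵥ M *ᵥ e) = ‖mulE S (toE e)‖ := by
    rw [norm_eq_sqrt_dot]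
    exact congrArg Real.sqrt (dot_sqrt S M hSsym hSS e e)
  rw [mulVec_sub, mulVec_add, dotProduct_sub, dotProduct_add]
  have hT1 : e ⬝ᵥ M *ᵥ (F *ᵥ e) ≤ -lam * (e ⬝ᵥ M *ᵥ e) :=
    lyap_bound M F hMsym lam hMLyap e
  have hT2 : e ⬝ᵥ M *ᵥ (D₂ *ᵥ ((w₂ - w₁ : Euc p) : Fin p → ℝ)) ≤
      Real.sqrt (e ⬝ᵥ M *ᵥ e) *
        ∑ i : Fin p, ‖mulE S (WithLp.toLp 2 (fun j => D₂ j i) : Euc n₂)‖ * |w₁ i - w₂ i| := by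
    rw [dot_sqrt S M hSsym hSS, mulVec_mulVec, col_sum, dot_sum, hnorm, Finset.mul_sum]
    refine Finset.sum_le_sum (fun i _ => ?_)
    rw [dotProduct_smul, smul_eq_mul]
    have h1 : |(S *ᵥ e) ⬝ᵥ (S *ᵥ (fun j => D₂ j i))| ≤
        ‖mulE S (toE e)‖ * ‖mulE S (WithLp.toLp 2 (fun j => D₂ j i) : Euc n₂)‖ :=
      dot_le_norm (mulE S (toE e)) (mulE S (WithLp.toLp 2 (fun j => D₂ j i) : Euc n₂))
    have h2 : |((w₂ - w₁ : Euc p) : Fin p → ℝ) i| = |w₁ i - w₂ i| :=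
      abs_sub_comm (w₂ i) (w₁ i)
    calc ((w₂ - w₁ : Euc p) : Fin p → ℝ) i * ((S *ᵥ e) ⬝ᵥ (S *ᵥ fun j => D₂ j i))
        ≤ |((w₂ - w₁ : Euc p) : Fin p → ℝ) i| * |(S *ᵥ e) ⬝ᵥ (S *ᵥ fun j => D₂ j i)| := by
          rw [← abs_mul]; exact le_abs_self _
      _ ≤ |((w₂ - w₁ : Euc p) : Fin p → ℝ) i| *
            (‖mulE S (toE e)‖ * ‖mulE S (WithLp.toLp 2 (fun j => D₂ j i) : Euc n₂)‖) :=
          mul_le_mul_of_nonneg_left h1 (abs_nonneg _)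
      _ = ‖mulE S (toE e)‖ * (‖mulE S (WithLp.toLp 2 (fun j => D₂ j i) : Euc n₂)‖ * |w₁ i - w₂ i|) := by
          rw [h2]; ring
  have hT3 : -(e ⬝ᵥ M *ᵥ (Q *ᵥ (u₁ : Fin m₁ → ℝ))) ≤
      Real.sqrt (e ⬝ᵥ M *ᵥ e) * (specNorm (S * Q) * ‖u₁‖) := by
    rw [dot_sqrt S M hSsym hSS, mulVec_mulVec, hnorm]
    have h1 : |(S *ᵥ e) ⬝ᵥ ((S * Q) *ᵥ (u₁ : Fin m₁ → ℝ))| ≤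
        ‖mulE S (toE e)‖ * ‖mulE (S * Q) u₁‖ :=
      dot_le_norm (mulE S (toE e)) (mulE (S * Q) u₁)
    have h2 : ‖mulE (S * Q) u₁‖ ≤ specNorm (S * Q) * ‖u₁‖ := mulE_le_spec (S * Q) u₁
    calc -((S *ᵥ e) ⬝ᵥ ((S * Q) *ᵥ (u₁ : Fin m₁ → ℝ)))
        ≤ |(S *ᵥ e) ⬝ᵥ ((S * Q) *ᵥ (u₁ : Fin m₁ → ℝ))| := neg_le_abs _
      _ ≤ ‖mulE S (toE e)‖ * ‖mulE (S * Q) u₁‖ := h1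
      _ ≤ ‖mulE S (toE e)‖ * (specNorm (S * Q) * ‖u₁‖) :=
          mul_le_mul_of_nonneg_left h2 (norm_nonneg _)
  have hexp : Real.sqrt (e ⬝ᵥ M *ᵥ e) * (-(lam * Real.sqrt (e ⬝ᵥ M *ᵥ e))
        + specNorm (S * Q) * ‖u₁‖
        + ∑ i : Fin p, ‖mulE S (WithLp.toLp 2 (fun j => D₂ j i) : Euc n₂)‖ * |w₁ i - w₂ i|)
      = -lam * (e ⬝ᵥ M *ᵥ e)
        + Real.sqrt (e ⬝ᵥ M *ᵥ e) * (specNorm (S * Q) * ‖u₁‖)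
        + Real.sqrt (e ⬝ᵥ M *ᵥ e) *
            ∑ i : Fin p, ‖mulE S (WithLp.toLp 2 (fun j => D₂ j i) : Euc n₂)‖ * |w₁ i - w₂ i| := by
    have hmm : Real.sqrt (e ⬝ᵥ M *ᵥ e) * Real.sqrt (e ⬝ᵥ M *ᵥ e) = e ⬝ᵥ M *ᵥ e :=
      Real.mul_self_sqrt hq0
    linear_combination (-lam) * hmm
  rw [hexp]
  linarith [hT1, hT2, hT3]

lemma zero_case_bound {n₂ m₁ p : ℕ}
    (S : Matrix (Fin n₂) (Fin n₂) ℝ) (Q : Matrix (Fin n₂) (Fin m₁) ℝ)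
    (D₂ : Matrix (Fin n₂) (Fin p) ℝ) (u₁ : Euc m₁) (w₁ w₂ : Euc p) :
    ‖toE (S *ᵥ (D₂ *ᵥ ((w₂ - w₁ : Euc p) : Fin p → ℝ) - Q *ᵥ (u₁ : Fin m₁ → ℝ)))‖
      ≤ specNorm (S * Q) * ‖u₁‖
        + ∑ i : Fin p, ‖mulE S (WithLp.toLp 2 (fun j => D₂ j i) : Euc n₂)‖ * |w₁ i - w₂ i| := by
  rw [mulVec_sub, toE_sub]
  refine (norm_sub_le _ _).trans ?_
  have hA : ‖toE (S *ᵥ (D₂ *ᵥ ((w₂ - w₁ : Euc p) : Fin p → ℝ)))‖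
      ≤ ∑ i : Fin p, ‖mulE S (WithLp.toLp 2 (fun j => D₂ j i) : Euc n₂)‖ * |w₁ i - w₂ i| := by
    rw [show S *ᵥ (D₂ *ᵥ ((w₂ - w₁ : Euc p) : Fin p → ℝ))
        = (S * D₂) *ᵥ ((w₂ - w₁ : Euc p) : Fin p → ℝ) from mulVec_mulVec _ _ _,
      col_sum, toE_sum]
    refine (norm_sum_le _ _).trans (Finset.sum_le_sum fun i _ => ?_)
    rw [show toE ((((w₂ - w₁ : Euc p) : Fin p → ℝ) i) • (S *ᵥ (fun j => D₂ j i)))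
        = (((w₂ - w₁ : Euc p) : Fin p → ℝ) i) • toE (S *ᵥ (fun j => D₂ j i)) from rfl,
      norm_smul, Real.norm_eq_abs]
    have h2 : |((w₂ - w₁ : Euc p) : Fin p → ℝ) i| = |w₁ i - w₂ i| :=
      abs_sub_comm (w₂ i) (w₁ i)
    rw [h2, mul_comm]
    exact le_of_eq rfl
  have hB : ‖toE (S *ᵥ (Q *ᵥ (u₁ : Fin m₁ → ℝ)))‖ ≤ specNorm (S * Q) * ‖u₁‖ := by
    rw [show S *ᵥ (Q *ᵥ (u₁ : Fin m₁ → ℝ)) = (S * Q) *ᵥ (u₁ : Fin m₁ → ℝ)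
      from mulVec_mulVec _ _ _]
    exact mulE_le_spec (S * Q) u₁
  linarith [hA, hB]

/-- Corollary 2: suppose `A₂+B₂K₁` is Hurwitz (witnessed by the Lyapunov
inequalities below), `A₂P = PA₁ + B₂K₂`, `D₂ = PD₁ + B₂K₃`, `C₁ = C₂P`, and `M ≻ 0`
symmetric with `C₂ᵀC₂ ⪯ M` and `(A₂+B₂K₁)ᵀM + M(A₂+B₂K₁) ⪯ −2λM`, `λ > 0`.
Then, for `V(x₁,x₂) = ((x₂−Px₁)ᵀM(x₂−Px₁))^{1/2}`:
(i) `|C₁x₁ − C₂x₂| ≤ V(x₁,x₂)`;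
(ii) for the interface `u₂ = K₁(x₂−Px₁) − K₂x₁ − K₃w₁ + K₄u₁` and whenever `V > 0`, the
derivative of `V` along the dynamics satisfies the stated decay bound;
(iii) consequently the simulation-function decay inequality holds for the Dini
derivative of `V` with `α = id`, `λ(r) = λr`, `ρ(r) = |√M(PB₁−B₂K₄)|·r` and
`μ(s) = Σᵢ |√M dᵢ|·sᵢ`, `dᵢ` the columns of `D₂`. -/
theorem corollary_linear_simFun {n₁ n₂ m₁ m₂ p q : ℕ}
    (A₁ : Matrix (Fin n₁) (Fin n₁) ℝ) (B₁ : Matrix (Fin n₁) (Fin m₁) ℝ)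
    (C₁ : Matrix (Fin q) (Fin n₁) ℝ) (D₁ : Matrix (Fin n₁) (Fin p) ℝ)
    (A₂ : Matrix (Fin n₂) (Fin n₂) ℝ) (B₂ : Matrix (Fin n₂) (Fin m₂) ℝ)
    (C₂ : Matrix (Fin q) (Fin n₂) ℝ) (D₂ : Matrix (Fin n₂) (Fin p) ℝ)
    (P : Matrix (Fin n₂) (Fin n₁) ℝ)
    (K₁ : Matrix (Fin m₂) (Fin n₂) ℝ) (K₂ : Matrix (Fin m₂) (Fin n₁) ℝ)
    (K₃ : Matrix (Fin m₂) (Fin p) ℝ) (K₄ : Matrix (Fin m₂) (Fin m₁) ℝ)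
    (lam : ℝ) (hlam : 0 < lam)
    (M : Matrix (Fin n₂) (Fin n₂) ℝ) (hMsym : Mᵀ = M) (hM : M.PosDef)
    (hHur : ∀ z : ℂ, ((A₂ + B₂ * K₁).charpoly.map (algebraMap ℝ ℂ)).IsRoot z → z.re < 0)
    (hMC : (M - C₂ᵀ * C₂).PosSemidef)
    (hMLyap : ((-(2 * lam)) • M - ((A₂ + B₂ * K₁)ᵀ * M + M * (A₂ + B₂ * K₁))).PosSemidef)
    (hK₂ : A₂ * P = P * A₁ + B₂ * K₂)
    (hK₃ : D₂ = P * D₁ + B₂ * K₃)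
    (hC : C₁ = C₂ * P) :
    -- (i)
    (∀ (x₁ : Euc n₁) (x₂ : Euc n₂),
      ‖mulE C₁ x₁ - mulE C₂ x₂‖ ≤ Vquad P M (x₁, x₂)) ∧
    -- (ii)
    (∀ (x₁ : Euc n₁) (x₂ : Euc n₂) (u₁ : Euc m₁) (w₁ w₂ : Euc p),
      0 < Vquad P M (x₁, x₂) →
      let u₂ : Euc m₂ := mulE K₁ (x₂ - mulE P x₁) - mulE K₂ x₁ - mulE K₃ w₁ + mulE K₄ u₁
      (((x₂ - mulE P x₁ : Euc n₂) : Fin n₂ → ℝ) ⬝ᵥ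
          M.mulVec (((mulE A₂ x₂ + mulE B₂ u₂ + mulE D₂ w₂) -
            mulE P (mulE A₁ x₁ + mulE B₁ u₁ + mulE D₁ w₁) : Euc n₂) : Fin n₂ → ℝ)) /
          Vquad P M (x₁, x₂) ≤
        -(lam * Vquad P M (x₁, x₂)) +
          specNorm ((posSemidefSqrt hM.posSemidef) * (P * B₁ - B₂ * K₄)) * ‖u₁‖ +
          ∑ i : Fin p, ‖mulE (posSemidefSqrt hM.posSemidef) (WithLp.toLp 2 (fun j => D₂ j i) : Euc n₂)‖ * |w₁ i - w₂ i|) ∧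
    -- (iii)
    (∀ (x₁ : Euc n₁) (x₂ : Euc n₂) (u₁ : Euc m₁) (w₁ w₂ : Euc p),
      let u₂ : Euc m₂ := mulE K₁ (x₂ - mulE P x₁) - mulE K₂ x₁ - mulE K₃ w₁ + mulE K₄ u₁
      diniDeriv (Vquad P M) (x₁, x₂)
          (mulE A₁ x₁ + mulE B₁ u₁ + mulE D₁ w₁,
           mulE A₂ x₂ + mulE B₂ u₂ + mulE D₂ w₂) ≤
        -(lam * Vquad P M (x₁, x₂)) +
          specNorm ((posSemidefSqrt hM.posSemidef) * (P * B₁ - B₂ * K₄)) * ‖u₁‖ +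
          ∑ i : Fin p, ‖mulE (posSemidefSqrt hM.posSemidef) (WithLp.toLp 2 (fun j => D₂ j i) : Euc n₂)‖ * |w₁ i - w₂ i|) := by
  have hMps : M.PosSemidef := hM.posSemidef
  have hSsym : (posSemidefSqrt hM.posSemidef)ᵀ = posSemidefSqrt hM.posSemidef :=
    posSemidefSqrt_transpose hM.posSemidef
  have hSS : posSemidefSqrt hM.posSemidef * posSemidefSqrt hM.posSemidef = M :=
    posSemidefSqrt_mul_self hM.posSemidef
  have hVnorm : ∀ (x₁ : Euc n₁) (x₂ : Euc n₂),
      Vquad P M (x₁, x₂) = ‖mulE (posSemidefSqrt hM.posSemidef) (x₂ - mulE P x₁)‖ := by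
    intro x₁ x₂
    rw [norm_eq_sqrt_dot]
    exact congrArg Real.sqrt (dot_sqrt _ M hSsym hSS _ _)
  -- the key estimate, in the form matching the statement
  have key : ∀ (x₁ : Euc n₁) (x₂ : Euc n₂) (u₁ : Euc m₁) (w₁ w₂ : Euc p),
      (((x₂ - mulE P x₁ : Euc n₂) : Fin n₂ → ℝ) ⬝ᵥ
          M.mulVec (((mulE A₂ x₂ + mulE B₂ (mulE K₁ (x₂ - mulE P x₁) - mulE K₂ x₁ -
              mulE K₃ w₁ + mulE K₄ u₁) + mulE D₂ w₂) -
            mulE P (mulE A₁ x₁ + mulE B₁ u₁ + mulE D₁ w₁) : Euc n₂) : Fin n₂ → ℝ))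
      ≤ Vquad P M (x₁, x₂) * (-(lam * Vquad P M (x₁, x₂)) +
          specNorm (posSemidefSqrt hM.posSemidef * (P * B₁ - B₂ * K₄)) * ‖u₁‖ +
          ∑ i : Fin p, ‖mulE (posSemidefSqrt hM.posSemidef) (WithLp.toLp 2 (fun j => D₂ j i) : Euc n₂)‖ *
            |w₁ i - w₂ i|) := by
    intro x₁ x₂ u₁ w₁ w₂
    have hed : (((mulE A₂ x₂ + mulE B₂ (mulE K₁ (x₂ - mulE P x₁) - mulE K₂ x₁ -
              mulE K₃ w₁ + mulE K₄ u₁) + mulE D₂ w₂) -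
            mulE P (mulE A₁ x₁ + mulE B₁ u₁ + mulE D₁ w₁) : Euc n₂) : Fin n₂ → ℝ)
        = (A₂ + B₂ * K₁) *ᵥ ((x₂ - mulE P x₁ : Euc n₂) : Fin n₂ → ℝ)
          + D₂ *ᵥ ((w₂ - w₁ : Euc p) : Fin p → ℝ)
          - (P * B₁ - B₂ * K₄) *ᵥ (u₁ : Fin m₁ → ℝ) :=
      dyn_eq A₁ B₁ D₁ A₂ B₂ D₂ P K₁ K₂ K₃ K₄ hK₂ hK₃ x₁ x₂ u₁ w₁ w₂
    rw [hed]
    exact key_bound M (posSemidefSqrt hM.posSemidef) (A₂ + B₂ * K₁) (P * B₁ - B₂ * K₄) D₂ lam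
      hMsym hSsym hSS hMLyap hMps _ u₁ w₁ w₂
  refine ⟨?_, ?_, ?_⟩
  · -- (i)
    intro x₁ x₂
    have hsub : mulE C₁ x₁ - mulE C₂ x₂ = -(mulE C₂ (x₂ - mulE P x₁)) := by
      rw [hC, ← mulE_mulE, mulE_sub]
      abel
    rw [hsub, norm_neg, norm_eq_sqrt_dot,
      show Vquad P M (x₁, x₂) = Real.sqrt (((x₂ - mulE P x₁ : Euc n₂) : Fin n₂ → ℝ) ⬝ᵥ
        M.mulVec ((x₂ - mulE P x₁ : Euc n₂) : Fin n₂ → ℝ)) from rfl]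
    refine Real.sqrt_le_sqrt ?_
    have h1 : ((mulE C₂ (x₂ - mulE P x₁) : Euc q) : Fin q → ℝ) ⬝ᵥ
          ((mulE C₂ (x₂ - mulE P x₁) : Euc q) : Fin q → ℝ)
        = ((x₂ - mulE P x₁ : Euc n₂) : Fin n₂ → ℝ) ⬝ᵥ
          (C₂ᵀ * C₂) *ᵥ ((x₂ - mulE P x₁ : Euc n₂) : Fin n₂ → ℝ) :=
      (dot_mul C₂ _ _).symm
    rw [h1]
    have h2 := hMC.dotProduct_mulVec_nonneg ((x₂ - mulE P x₁ : Euc n₂) : Fin n₂ → ℝ)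
    simp only [star_trivial, sub_mulVec, dotProduct_sub] at h2
    linarith [h2]
  · -- (ii)
    intro x₁ x₂ u₁ w₁ w₂ hV u₂
    rw [div_le_iff₀ hV]
    exact le_of_le_of_eq (key x₁ x₂ u₁ w₁ w₂) (mul_comm _ _)
  · -- (iii)
    intro x₁ x₂ u₁ w₁ w₂ u₂
    set v₁ : Euc n₁ := mulE A₁ x₁ + mulE B₁ u₁ + mulE D₁ w₁ with hv₁
    set v₂ : Euc n₂ := mulE A₂ x₂ + mulE B₂ u₂ + mulE D₂ w₂ with hv₂
    set a : Euc n₂ := mulE (posSemidefSqrt hM.posSemidef) (x₂ - mulE P x₁) with ha'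
    set b : Euc n₂ := mulE (posSemidefSqrt hM.posSemidef) (v₂ - mulE P v₁) with hb'
    have hfun : (fun t : ℝ => (Vquad P M ((x₁, x₂) + t • (v₁, v₂)) - Vquad P M (x₁, x₂)) / t)
        = fun t : ℝ => (‖a + t • b‖ - ‖a‖) / t := by
      funext t
      have h1 : Vquad P M ((x₁, x₂) + t • (v₁, v₂))
          = ‖mulE (posSemidefSqrt hM.posSemidef) ((x₂ + t • v₂) - mulE P (x₁ + t • v₁))‖ :=
        hVnorm (x₁ + t • v₁) (x₂ + t • v₂)
      have h2 : (x₂ + t • v₂) - mulE P (x₁ + t • v₁)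
          = (x₂ - mulE P x₁) + t • (v₂ - mulE P v₁) := by
        rw [mulE_add, mulE_smul]
        module
      rw [h1, h2, mulE_add, mulE_smul, hVnorm x₁ x₂]
    have hdd : diniDeriv (Vquad P M) (x₁, x₂) (v₁, v₂)
        = Filter.limsup (fun t : ℝ => (‖a + t • b‖ - ‖a‖) / t)
            (nhdsWithin (0 : ℝ) (Set.Ioi 0)) := by
      rw [diniDeriv, hfun]
    by_cases hz : a = 0
    · -- V = 0 case
      have hV0 : Vquad P M (x₁, x₂) = 0 := by
        rw [hVnorm x₁ x₂, ← ha', hz, norm_zero]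
      have hq0 : ((x₂ - mulE P x₁ : Euc n₂) : Fin n₂ → ℝ) ⬝ᵥ
          M *ᵥ ((x₂ - mulE P x₁ : Euc n₂) : Fin n₂ → ℝ) = 0 := by
        rw [dot_sqrt _ M hSsym hSS]
        have : (posSemidefSqrt hM.posSemidef *ᵥ ((x₂ - mulE P x₁ : Euc n₂) : Fin n₂ → ℝ))
            = ((a : Euc n₂) : Fin n₂ → ℝ) := rfl
        rw [this, hz]
        simp
      have he0 : ((x₂ - mulE P x₁ : Euc n₂) : Fin n₂ → ℝ) = 0 := by
        by_contra hne
        have := hM.dotProduct_mulVec_pos hne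
        simp only [star_trivial] at this
        rw [hq0] at this
        exact lt_irrefl 0 this
      have hedz : ((v₂ - mulE P v₁ : Euc n₂) : Fin n₂ → ℝ)
          = D₂ *ᵥ ((w₂ - w₁ : Euc p) : Fin p → ℝ)
            - (P * B₁ - B₂ * K₄) *ᵥ (u₁ : Fin m₁ → ℝ) := by
        have hed : ((v₂ - mulE P v₁ : Euc n₂) : Fin n₂ → ℝ)
            = (A₂ + B₂ * K₁) *ᵥ ((x₂ - mulE P x₁ : Euc n₂) : Fin n₂ → ℝ)
              + D₂ *ᵥ ((w₂ - w₁ : Euc p) : Fin p → ℝ)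
              - (P * B₁ - B₂ * K₄) *ᵥ (u₁ : Fin m₁ → ℝ) :=
          dyn_eq A₁ B₁ D₁ A₂ B₂ D₂ P K₁ K₂ K₃ K₄ hK₂ hK₃ x₁ x₂ u₁ w₁ w₂
        rw [hed, he0, mulVec_zero, zero_add]
      have hb2 : b = toE (posSemidefSqrt hM.posSemidef *ᵥ
          (D₂ *ᵥ ((w₂ - w₁ : Euc p) : Fin p → ℝ)
            - (P * B₁ - B₂ * K₄) *ᵥ (u₁ : Fin m₁ → ℝ))) := by
        rw [hb', mulE_def, hedz]
      rw [hdd, hz, limsup_norm_dir_zero, hV0, mul_zero, neg_zero, zero_add, hb2]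
      exact zero_case_bound (posSemidefSqrt hM.posSemidef) (P * B₁ - B₂ * K₄) D₂ u₁ w₁ w₂
    · -- V > 0 case
      have hVpos : 0 < Vquad P M (x₁, x₂) := by
        rw [hVnorm x₁ x₂, ← ha']
        exact norm_pos_iff.mpr hz
      rw [hdd, limsup_norm_dir a b hz]
      have hanorm : ‖a‖ = Vquad P M (x₁, x₂) := by rw [hVnorm x₁ x₂, ha']
      rw [hanorm, div_le_iff₀ hVpos]
      have hib : (inner ℝ a b) = ((x₂ - mulE P x₁ : Euc n₂) : Fin n₂ → ℝ) ⬝ᵥ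
          M *ᵥ ((v₂ - mulE P v₁ : Euc n₂) : Fin n₂ → ℝ) := by
        rw [inner_eq_dot]
        exact (dot_sqrt _ M hSsym hSS _ _).symm
      rw [hib]
      exact le_of_le_of_eq (key x₁ x₂ u₁ w₁ w₂) (mul_comm _ _)
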